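/- arXiv:2501.00259 — 2 statements merged into one kernel-verified Lean document; each statement's English description precedes it below -/
import Mathlib

section
/- Let G be a Hausdorff locally profinite topological group admitting a neighborhood basis of the identity consisting of profinite open subgroups, let ℓ be a prime, and let g ∈ G be an element such that the sequence g^(ℓ^k) converges to the identity as k → ∞. Then the homomorphism ℤ → G sending 1 to g extends to a continuous group homomorphism from the profinite completion ẑ = ∏_ℓ ℤ_ℓ to G. -/
/-! If `g ^ ℓ ^ N` lies in a compact open subgroup `U`, then all `g ^ n` with `n` in a fixed
`ℓ`-adic ball of radius `ℓ ^ (-N)` lie in a single left coset of `U`. Hence, as `n ∈ ℤ` tends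
`ℓ`-adically to `x ∈ ℤ_ℓ`, the powers `g ^ n` are eventually in cosets of arbitrarily small
compact open subgroups, and such a filter converges. So `n ↦ g ^ n` extends continuously to
`ℤ_ℓ`; the extension is a homomorphism because `ℤ` is dense, and precomposing with the
projection `ẑ → ℤ_ℓ` extends it to `ẑ`. -/

open Filter Topology

/-- For each prime `q`, `q.1` is prime. -/
instance (q : Nat.Primes) : Fact (Nat.Prime q.1) := ⟨q.2⟩

/-- The profinite completion `ẑ = ∏_ℓ ℤ_ℓ` of `ℤ`. -/
abbrev ZHat : Type := (q : Nat.Primes) → ℤ_[q.1]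

/-- The canonical embedding `ℤ → ẑ`. -/
noncomputable def zhatInt (n : ℤ) : ZHat := fun q => (n : ℤ_[q.1])

/-- The homomorphism `ℤ → G`, `1 ↦ g`, extends to a continuous group homomorphism
`ẑ → G`. -/
def ExtendsToZHat {G : Type*} [Group G] [TopologicalSpace G] (g : G) : Prop :=
  ∃ F : ZHat → G, Continuous F ∧ (∀ x y : ZHat, F (x + y) = F x * F y) ∧
    ∀ n : ℤ, F (zhatInt n) = g ^ n

open scoped Pointwise

namespace PadicInt

variable {p : ℕ} [Fact p.Prime]

theorem eventually_dvd_sub_appr (x : ℤ_[p]) (N : ℕ) :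
    ∀ᶠ n : ℤ in comap Int.cast (𝓝 x), (p : ℤ) ^ N ∣ n - x.appr N := by
  have hball : Metric.closedBall x ((p : ℝ) ^ (-(N : ℤ))) ∈ 𝓝 x :=
    Metric.closedBall_mem_nhds x (zpow_pos (mod_cast (Fact.out : p.Prime).pos) _)
  filter_upwards [preimage_mem_comap hball] with n hn
  rw [← norm_int_le_pow_iff_dvd, Int.cast_sub, Int.cast_natCast, ← dist_eq_norm]
  have happr : dist x (x.appr N) ≤ (p : ℝ) ^ (-(N : ℤ)) := by
    rw [dist_eq_norm, norm_le_pow_iff_mem_span_pow]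
    exact appr_spec N x
  exact (dist_triangle_max _ x _).trans (max_le hn happr)

end PadicInt

theorem Subgroup.zpow_mem_of_dvd {G : Type*} [Group G] (U : Subgroup G) {g : G} {m d : ℤ}
    (hg : g ^ m ∈ U) (hmd : m ∣ d) : g ^ d ∈ U := by
  obtain ⟨k, rfl⟩ := hmd
  rw [zpow_mul]
  exact U.zpow_mem hg k

section

variable {G : Type*} [Group G] [TopologicalSpace G] [IsTopologicalGroup G]

theorem exists_le_nhds_of_eventually_mem_leftCoset {𝓕 : Filter G} [𝓕.NeBot]
    (h : ∀ V ∈ 𝓝 (1 : G), ∃ U : Subgroup G, IsOpen (U : Set G) ∧ IsCompact (U : Set G) ∧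
      (U : Set G) ⊆ V ∧ ∃ a : G, ∀ᶠ y in 𝓕, y ∈ a • (U : Set G)) :
    ∃ c : G, 𝓕 ≤ 𝓝 c := by
  obtain ⟨U₀, -, hU₀, -, a₀, ha₀⟩ := h Set.univ univ_mem
  obtain ⟨c, -, hc⟩ := (hU₀.smul a₀).exists_clusterPt (le_principal_iff.2 ha₀)
  refine ⟨c, fun W hW => ?_⟩
  have hW' : (c * ·) ⁻¹' W ∈ 𝓝 (1 : G) :=
    (continuous_const_mul c).continuousAt.preimage_mem_nhds (by simpa using hW)
  obtain ⟨U, hUo, -, hUW, a, ha⟩ := h _ hW'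
  have hcU : c • (U : Set G) ∈ 𝓝 c :=
    (hUo.smul c).mem_nhds (by simpa using mem_leftCoset c U.one_mem)
  -- The coset `a • U` meets the neighbourhood `c • U` of the cluster point, so it is `c • U ⊆ W`.
  obtain ⟨y, hyc, hya⟩ : ∃ y, y ∈ c • (U : Set G) ∧ y ∈ a • (U : Set G) :=
    ((hc.frequently hcU).and_eventually ha).exists
  filter_upwards [ha] with z hz
  rw [mem_leftCoset_iff] at hyc hya hz
  have : c⁻¹ * z ∈ U := by
    simpa [mul_assoc] using U.mul_mem (U.mul_mem hyc (U.inv_mem hya)) hz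
  simpa using hUW this

variable {p : ℕ} [Fact p.Prime] {g : G}

theorem exists_tendsto_zpow_comap_intCast
    (hbasis : ∀ V ∈ 𝓝 (1 : G), ∃ U : Subgroup G, IsOpen (U : Set G) ∧ IsCompact (U : Set G) ∧
      (U : Set G) ⊆ V)
    (hg : Tendsto (fun k : ℕ => g ^ p ^ k) atTop (𝓝 1)) (x : ℤ_[p]) :
    ∃ c : G, Tendsto (g ^ · : ℤ → G) (comap Int.cast (𝓝 x)) (𝓝 c) := by
  have : (comap Int.cast (𝓝 x)).NeBot := by
    simpa using (PadicInt.denseRange_intCast.nhdsWithin_neBot x).comap_of_range_mem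
      self_mem_nhdsWithin
  refine exists_le_nhds_of_eventually_mem_leftCoset fun V hV => ?_
  obtain ⟨U, hUo, hUc, hUV⟩ := hbasis V hV
  obtain ⟨N, hN⟩ := (hg.eventually_mem (hUo.mem_nhds U.one_mem)).exists
  refine ⟨U, hUo, hUc, hUV, g ^ (x.appr N : ℤ), eventually_map.2 ?_⟩
  filter_upwards [PadicInt.eventually_dvd_sub_appr x N] with n hn
  rw [mem_leftCoset_iff, ← zpow_neg, ← zpow_add, neg_add_eq_sub]
  exact U.zpow_mem_of_dvd (by exact_mod_cast hN) hn

theorem exists_continuous_padicInt_extension_zpow [T2Space G]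
    (hbasis : ∀ V ∈ 𝓝 (1 : G), ∃ U : Subgroup G, IsOpen (U : Set G) ∧ IsCompact (U : Set G) ∧
      (U : Set G) ⊆ V)
    (hg : Tendsto (fun k : ℕ => g ^ p ^ k) atTop (𝓝 1)) :
    ∃ F : ℤ_[p] → G, Continuous F ∧ (∀ x y, F (x + y) = F x * F y) ∧ ∀ n : ℤ, F n = g ^ n := by
  set f : ℤ_[p] → G := Function.extend Int.cast (g ^ · : ℤ → G) 1
  have hf : f ∘ Int.cast = (g ^ · : ℤ → G) := funext (Int.cast_injective.extend_apply _ _)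
  have hlim : ∀ x : ℤ_[p], ∃ c, Tendsto f (𝓝[Set.range Int.cast] x) (𝓝 c) := by
    intro x
    obtain ⟨c, hc⟩ := exists_tendsto_zpow_comap_intCast hbasis hg x
    refine ⟨c, ?_⟩
    rwa [nhdsWithin, ← map_comap, tendsto_map'_iff, hf]
  set F := extendFrom (Set.range Int.cast) f
  have hF : Continuous F := continuous_extendFrom PadicInt.denseRange_intCast hlim
  have hFint (n : ℤ) : F n = g ^ n := by
    have hFn := (tendsto_extendFrom (hlim n)).mono_left
      (pure_le_nhdsWithin (Set.mem_range_self n))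
    exact (tendsto_nhds_unique (tendsto_pure_nhds f n) hFn).symm.trans (congrFun hf n)
  have hadd : (fun xy : ℤ_[p] × ℤ_[p] => F (xy.1 + xy.2)) = fun xy => F xy.1 * F xy.2 :=
    (PadicInt.denseRange_intCast.prodMap PadicInt.denseRange_intCast).equalizer
      (hF.comp continuous_add) (hF.fst'.mul hF.snd')
      (funext fun mn => by simp [← Int.cast_add, hFint, zpow_add])
  exact ⟨F, hF, fun x y => congrFun hadd (x, y), hFint⟩

end

/-- If `G` is a Hausdorff locally profinite topological group (with a neighborhood basis of
the identity consisting of profinite open subgroups), `ℓ` is a prime, and `g^(ℓ^k) → 1`,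
then `ℤ → G`, `1 ↦ g`, extends to a continuous homomorphism `ẑ → G`. -/
theorem extendsToZHat_of_tendsto_pow_prime
    {G : Type*} [Group G] [TopologicalSpace G] [IsTopologicalGroup G] [T2Space G]
    (hbasis : ∀ V ∈ 𝓝 (1 : G), ∃ U : Subgroup G, IsOpen (U : Set G) ∧ IsCompact (U : Set G) ∧
      IsTotallyDisconnected (U : Set G) ∧ (U : Set G) ⊆ V)
    (ℓ : ℕ) (hℓ : ℓ.Prime) (g : G)
    (hg : Tendsto (fun k : ℕ => g ^ ℓ ^ k) atTop (𝓝 (1 : G))) :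
    ExtendsToZHat g := by
  have : Fact ℓ.Prime := ⟨hℓ⟩
  obtain ⟨F, hF, hadd, hint⟩ := exists_continuous_padicInt_extension_zpow
    (fun V hV => (hbasis V hV).imp fun _ ⟨hUo, hUc, _, hUV⟩ => ⟨hUo, hUc, hUV⟩) hg
  exact ⟨fun z => F (z ⟨ℓ, hℓ⟩), hF.comp (continuous_apply _), fun x y => hadd _ _, hint⟩
end

section
/- Let G be a Hausdorff locally profinite topological group, g ∈ G, and m a positive integer. Then the homomorphism ℤ → G, 1 ↦ g, extends to a continuous homomorphism ẑ → G if and only if the homomorphism ℤ → G, 1 ↦ g^m, extends to a continuous homomorphism ẑ → G. -/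
/-
If `F : ẑ → G` extends `n ↦ g ^ (m * n)`, then `g` commutes with the image of `F`, because `ℤ` is
dense in `ẑ` and `G` is Hausdorff. Multiplication by `m` identifies `ẑ` with `mẑ`, an open subgroup
with `ẑ = ℤ + mẑ` and `ℤ ∩ mẑ = mℤ`, so `n + m * y ↦ g ^ n * F y` is a well-defined homomorphism
extending `n ↦ g ^ n`. It is continuous at `0`, hence everywhere, because it pulls back to `F`
along the open map `y ↦ m * y`. The converse direction restricts along multiplication by `m`.
-/

open Filter Topology

theorem exists_continuous_extension_of_isOpenMap {A C G : Type*}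
    [AddCommGroup A] [TopologicalSpace A] [IsTopologicalAddGroup A] [AddGroup C]
    [TopologicalSpace C] [Group G] [TopologicalSpace G] [ContinuousMul G]
    (φ : C →+ A) (hφ : IsOpenMap φ) (a : A) (hcover : ∀ x, ∃ n : ℤ, ∃ c, x = n • a + φ c)
    {F : C → G} (hFc : Continuous F) (hFadd : ∀ c d, F (c + d) = F c * F d)
    {g : G} (hcomm : ∀ c, Commute g (F c)) (hFint : ∀ (n : ℤ) c, φ c = n • a → F c = g ^ n) :
    ∃ H : A → G, Continuous H ∧ (∀ x y, H (x + y) = H x * H y) ∧ ∀ n : ℤ, H (n • a) = g ^ n := by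
  have hF0 : F 0 = 1 := by simpa using hFadd 0 0
  have hwd : ∀ (n n' : ℤ) c c', n • a + φ c = n' • a + φ c' → g ^ n * F c = g ^ n' * F c' := by
    intro n n' c c' h
    have hdiff : φ (c - c') = (n' - n) • a := by
      rw [map_sub, sub_smul, sub_eq_sub_iff_add_eq_add, add_comm, h]
    calc g ^ n * F c = g ^ n * (F (c - c') * F c') := by rw [← hFadd, sub_add_cancel]
      _ = g ^ n' * F c' := by rw [hFint _ _ hdiff, ← mul_assoc, ← zpow_add, add_sub_cancel]
  choose n c hx using hcover
  set H : A → G := fun x => g ^ n x * F (c x)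
  have hH : ∀ (k : ℤ) d, H (k • a + φ d) = g ^ k * F d := fun k d =>
    hwd _ k _ d (hx (k • a + φ d)).symm
  have hHadd : ∀ x y, H (x + y) = H x * H y := by
    intro x y
    have hxy : x + y = (n x + n y) • a + φ (c x + c y) := by
      conv_lhs => rw [hx x, hx y]
      rw [add_zsmul, map_add]
      abel
    rw [hxy, hH, zpow_add, hFadd]
    simp only [H, mul_assoc]
    rw [← mul_assoc (F (c x)), ← ((hcomm (c x)).zpow_left (n y)).eq, mul_assoc]
  have hHF : ∀ d, H (φ d) = F d := fun d => by simpa using hH 0 d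
  have hH0 : Tendsto H (𝓝 0) (𝓝 1) := fun V hV => by
    have := hφ.image_mem_nhds (hFc.continuousAt (hF0 ▸ hV : V ∈ 𝓝 (F 0)))
    rw [map_zero] at this
    refine Filter.mem_map.2 (Filter.mem_of_superset this ?_)
    rintro _ ⟨d, hd, rfl⟩
    rwa [Set.mem_preimage, hHF]
  refine ⟨H, continuous_iff_continuousAt.2 fun x => ?_, hHadd,
    fun k => by simpa [hF0] using hH k 0⟩
  have hshift : ∀ y, H x * H (y - x) = H y := fun y => by rw [← hHadd, add_sub_cancel]
  have := ((tendsto_const_nhds (x := H x)).mul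
    (hH0.comp (tendsto_sub_nhds_zero_iff.2 (tendsto_id (x := 𝓝 x))))).congr hshift
  rwa [mul_one] at this

namespace PadicInt

variable {p : ℕ} [Fact p.Prime]

theorem natCast_dvd_iff_pow_dvd {N : ℕ} (hN : N ≠ 0) {z : ℤ_[p]} :
    (N : ℤ_[p]) ∣ z ↔ (p : ℤ_[p]) ^ N.factorization p ∣ z := by
  have hunit : IsUnit ((ordCompl[p] N : ℕ) : ℤ_[p]) :=
    isUnit_iff.2 (norm_natCast_eq_one_iff.2 (Nat.coprime_ordCompl Fact.out hN))
  rw [← Nat.ordProj_mul_ordCompl_eq_self N p, Nat.cast_mul, Nat.cast_pow, hunit.mul_right_dvd,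
    Nat.ordProj_mul_ordCompl_eq_self]

theorem exists_pow_dvd_sub_imp_mem_of_mem_nhds {t : Set ℤ_[p]} {z : ℤ_[p]} (ht : t ∈ 𝓝 z) :
    ∃ k : ℕ, ∀ w, (p : ℤ_[p]) ^ k ∣ w - z → w ∈ t := by
  obtain ⟨ε, hε, hball⟩ := Metric.mem_nhds_iff.1 ht
  obtain ⟨k, hk⟩ := exists_pow_neg_lt p hε
  refine ⟨k, fun w hw => hball ?_⟩
  rw [Metric.mem_ball, dist_eq_norm]
  exact ((norm_le_pow_iff_mem_span_pow _ k).2 (Ideal.mem_span_singleton.2 hw)).trans_lt hk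

end PadicInt

namespace ZHat

theorem exists_intCast_pow_dvd_sub (x : ZHat) (S : Finset Nat.Primes) (k : Nat.Primes → ℕ) :
    ∃ n : ℤ, ∀ p ∈ S, ((p : ℕ) : ℤ_[p]) ^ k p ∣ x p - n := by
  obtain ⟨n, hn⟩ := Nat.chineseRemainderOfFinset (fun p => (x p).appr (k p))
    (fun p : Nat.Primes => (p : ℕ) ^ k p) S (fun p _ => pow_ne_zero _ p.2.ne_zero)
    fun p _ q _ hpq => .pow _ _ ((Nat.coprime_primes p.2 q.2).2 (Subtype.coe_ne_coe.2 hpq))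
  refine ⟨n, fun p hp => ?_⟩
  have happr := Ideal.mem_span_singleton.1 ((x p).appr_spec (k p))
  have hcong : ((p : ℕ) : ℤ_[p]) ^ k p ∣ ((x p).appr (k p) : ℤ_[p]) - (n : ℤ) := by
    simpa using map_dvd (Int.castRingHom ℤ_[p]) (Nat.modEq_iff_dvd.1 (hn p hp))
  simpa using dvd_add happr hcong

theorem denseRange_intCast : DenseRange (Int.cast : ℤ → ZHat) := by
  refine fun x => mem_closure_iff_nhds.2 fun U hU => ?_
  rw [nhds_pi, Filter.mem_pi] at hU
  obtain ⟨I, hI, t, ht, hsub⟩ := hU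
  choose k hk using fun p => PadicInt.exists_pow_dvd_sub_imp_mem_of_mem_nhds (ht p)
  obtain ⟨n, hn⟩ := exists_intCast_pow_dvd_sub x hI.toFinset k
  exact ⟨n, hsub fun p hp => hk p _ (dvd_sub_comm.1 (hn p (hI.mem_toFinset.2 hp))), n, rfl⟩

theorem exists_intCast_add_mul (x : ZHat) {N : ℕ} (hN : N ≠ 0) :
    ∃ n : ℤ, ∃ y : ZHat, x = n + N * y := by
  obtain ⟨n, hn⟩ := exists_intCast_pow_dvd_sub x (N.primeFactors.subtype Nat.Prime)
    fun p => N.factorization p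
  have hdvd : ∀ p : Nat.Primes, (N : ℤ_[p]) ∣ x p - n := fun p => by
    rw [PadicInt.natCast_dvd_iff_pow_dvd hN]
    by_cases hp : p ∈ N.primeFactors.subtype Nat.Prime
    · exact hn p hp
    · have : N.factorization p = 0 := Finsupp.notMem_support_iff.1 fun h =>
        hp (Finset.mem_subtype.2 (by rwa [← Nat.support_factorization]))
      simp [this]
  choose y hy using hdvd
  exact ⟨n, y, funext fun p => by simp [← hy p]⟩

theorem exists_natCast_add_mul (x : ZHat) {N : ℕ} (hN : N ≠ 0) :
    ∃ r < N, ∃ y : ZHat, x = r + N * y := by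
  obtain ⟨n, y, rfl⟩ := exists_intCast_add_mul x hN
  obtain ⟨r, hr⟩ := Int.eq_ofNat_of_zero_le (Int.emod_nonneg n (by omega : (N : ℤ) ≠ 0))
  have hlt := Int.emod_lt_of_pos n (by omega : (0 : ℤ) < N)
  refine ⟨r, by omega, y + (n / N : ℤ), ?_⟩
  conv_lhs => rw [← Int.emod_add_mul_ediv n N, hr]
  push_cast
  ring

theorem intCast_dvd_of_mul_eq_intCast {m : ℕ} {c : ZHat} {z : ℤ} (h : m * c = z) :
    (m : ℤ) ∣ z := by
  rw [Int.natCast_dvd, Nat.dvd_iff_prime_pow_dvd_dvd]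
  intro p k hp hpk
  have : Fact p.Prime := ⟨hp⟩
  have hdvd : (p : ℤ_[p]) ^ k ∣ (z : ℤ_[p]) :=
    (by exact_mod_cast Nat.cast_dvd_cast hpk : (p : ℤ_[p]) ^ k ∣ m).trans
      ⟨c ⟨p, hp⟩, (congrFun h ⟨p, hp⟩).symm⟩
  exact Int.natCast_dvd.1 (by exact_mod_cast (PadicInt.pow_p_dvd_int_iff k z).1 hdvd)

theorem mul_left_injective {m : ℕ} (hm : m ≠ 0) : Function.Injective ((m : ZHat) * ·) :=
  fun _ _ hab => funext fun p => mul_left_cancel₀ (Nat.cast_ne_zero.2 hm) (congrFun hab p)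

theorem isOpenEmbedding_mul_left {m : ℕ} (hm : m ≠ 0) : IsOpenEmbedding ((m : ZHat) * ·) := by
  have hcont : Continuous ((m : ZHat) * ·) := continuous_const_mul _
  let B := (AddMonoidHom.mulLeft (m : ZHat)).range
  have hclosed : IsClosed (B : Set ZHat) := (isCompact_range hcont).isClosed
  have hfin : Finite (ZHat ⧸ B) := by
    refine Finite.of_surjective (fun r : Fin m => QuotientAddGroup.mk (s := B) ((r : ℕ) : ZHat))
      fun q => ?_
    obtain ⟨x, rfl⟩ := QuotientAddGroup.mk_surjective q
    obtain ⟨r, hr, y, rfl⟩ := exists_natCast_add_mul x hm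
    exact ⟨⟨r, hr⟩, QuotientAddGroup.eq_iff_sub_mem.2 (AddMonoidHom.mem_range.2 ⟨-y, by simp⟩)⟩
  have := AddSubgroup.finiteIndex_of_finite_quotient (H := B)
  exact ⟨(hcont.isClosedEmbedding (mul_left_injective hm)).isEmbedding,
    B.isOpen_of_isClosed_of_finiteIndex hclosed⟩

end ZHat

theorem zhatInt_eq_intCast (n : ℤ) : zhatInt n = n := rfl

section

variable {G : Type*} [Group G] [TopologicalSpace G]

theorem ExtendsToZHat.pow {g : G} (h : ExtendsToZHat g) (m : ℕ) : ExtendsToZHat (g ^ m) := by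
  obtain ⟨F, hFc, hFadd, hFint⟩ := h
  refine ⟨fun x => F (m * x), hFc.comp (continuous_const_mul _),
    fun x y => by simp only [mul_add, hFadd], fun n => ?_⟩
  rw [← zpow_natCast, ← zpow_mul, ← hFint, zhatInt_eq_intCast, zhatInt_eq_intCast]
  push_cast
  rfl

theorem ExtendsToZHat.of_pow [IsTopologicalGroup G] [T2Space G] {g : G} {m : ℕ} (hm : 0 < m)
    (h : ExtendsToZHat (g ^ m)) : ExtendsToZHat g := by
  obtain ⟨F, hFc, hFadd, hFint⟩ := h
  have hcomm : ∀ c, Commute g (F c) := by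
    have := ZHat.denseRange_intCast.equalizer (g := fun c => g * F c) (h := fun c => F c * g)
      (continuous_const.mul hFc) (hFc.mul continuous_const) <| funext fun n => by
        simpa only [Function.comp, ← zhatInt_eq_intCast, hFint] using
          (((Commute.refl g).pow_right m).zpow_right n).eq
    exact fun c => congrFun this c
  obtain ⟨H, hHc, hHadd, hHint⟩ := exists_continuous_extension_of_isOpenMap
    (AddMonoidHom.mulLeft (m : ZHat)) (ZHat.isOpenEmbedding_mul_left hm.ne').isOpenMap 1
    (fun x => by simpa using ZHat.exists_intCast_add_mul x hm.ne') hFc hFadd hcomm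
    fun n c hc => by
      obtain ⟨k, rfl⟩ := ZHat.intCast_dvd_of_mul_eq_intCast (by simpa using hc)
      have hck : c = k := ZHat.mul_left_injective hm.ne' (by simpa using hc)
      rw [hck, ← zhatInt_eq_intCast, hFint, zpow_mul, zpow_natCast]
  exact ⟨H, hHc, hHadd, fun n => by simpa [zhatInt_eq_intCast] using hHint n⟩

end

theorem extendsToZHat_iff_extendsToZHat_pow_general
    {G : Type*} [Group G] [TopologicalSpace G] [IsTopologicalGroup G] [T2Space G]
    (m : ℕ) (hm : 0 < m) (g : G) :
    ExtendsToZHat g ↔ ExtendsToZHat (g ^ m) :=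
  ⟨fun h => h.pow m, fun h => h.of_pow hm⟩

/-- For a Hausdorff locally profinite topological group `G`, `g ∈ G` and `m` a positive
integer, `1 ↦ g` extends to a continuous homomorphism `ẑ → G` if and only if `1 ↦ g^m`
does. -/
theorem extendsToZHat_iff_extendsToZHat_pow
    {G : Type*} [Group G] [TopologicalSpace G] [IsTopologicalGroup G] [T2Space G]
    (hbasis : ∀ V ∈ 𝓝 (1 : G), ∃ U : Subgroup G, IsOpen (U : Set G) ∧ IsCompact (U : Set G) ∧
      IsTotallyDisconnected (U : Set G) ∧ (U : Set G) ⊆ V)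
    (m : ℕ) (hm : 0 < m) (g : G) :
    ExtendsToZHat g ↔ ExtendsToZHat (g ^ m) :=
  extendsToZHat_iff_extendsToZHat_pow_general m hm g
end
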